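/- arXiv:1807.10389 — 3 statements merged into one kernel-verified Lean document; each statement's English description precedes it below -/
import Mathlib

section
/- Let G be a finite metacyclic group presented by ⟨a, b ; a^m = 1, b^n = a^l, a^b = a^k⟩ with n = ind_m(k), and let R = {k^j - 1 mod m : j ∈ ℤ_n} ⊆ ℤ_m and L = {-(k^j - 1) mod m : j ∈ ℤ_n} ⊆ ℤ_m. Then the following are equivalent: (a) G has trivial centre; (b) R contains an element invertible in ℤ_m; (c) L contains an element invertible in ℤ_m. -/
/-!
Let `a`, `b` be the generators. The presentation is realised concretely: in `ℤ_m ⋊ ℤ`, with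
the generator of `ℤ` acting on `ℤ_m` by multiplication by `k⁻¹`, the element `b^n a^(-l)` is
central (because `k^n ≡ 1` and `l k ≡ l`), and the quotient by it satisfies the relations. The
universal properties of the presentation and of the semidirect product give homomorphisms in
both directions whose composite is the identity of the presented group, so the presented group
embeds into the model; there `a` has order `m` and every element is `a^x b^j`.

If `k - 1` is not a unit of `ℤ_m`, it is a zero divisor, `(k - 1) t = 0` with `t ≠ 0`, and
`a^t` is a nontrivial element commuting with `b`, hence central. If `k - 1` is a unit, an
element `a^x b^j` commuting with `a` has `k^j = 1`, so `n ∣ j` and, as `b^n = a^l`, it is a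
power `a^y`; commuting with `b` then forces `(k - 1) y = 0`, so `y = 0`. Finally
`k^j - 1 = (1 + k + ⋯ + k^(j-1)) (k - 1)`, so `R` contains a unit iff `k - 1` is one, and
`L = -R`.
-/

/-- Relations for the Hölder presentation
`⟨a, b ; a^m = 1, b^n = a^l, b⁻¹ab = a^k⟩`. -/
def holderRels (m n k l : ℕ) : Set (FreeGroup Bool) :=
  {FreeGroup.of true ^ m,
    FreeGroup.of false ^ n * (FreeGroup.of true ^ l)⁻¹,
    (FreeGroup.of false)⁻¹ * FreeGroup.of true * FreeGroup.of false *
      (FreeGroup.of true ^ k)⁻¹}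

/-- The group `⟨a, b ; a^m = 1, b^n = a^l, b⁻¹ab = a^k⟩`. -/
def HolderGroup (m n k l : ℕ) := PresentedGroup (holderRels m n k l)

instance (m n k l : ℕ) : Group (HolderGroup m n k l) := by
  unfold HolderGroup; infer_instance

/-- `n = ind_m(k)`: `n` is the least positive integer with `k^n ≡ 1 (mod m)`. -/
def IsIndex (m k n : ℕ) : Prop :=
  0 < n ∧ k ^ n ≡ 1 [MOD m] ∧ ∀ d : ℕ, 0 < d → k ^ d ≡ 1 [MOD m] → n ≤ d

/-- The set `R = {k^j - 1 mod m : j ∈ ℤ_n} ⊆ ℤ_m`. -/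
def Rset (m n k : ℕ) : Set (ZMod m) :=
  {x | ∃ j : ℕ, j < n ∧ x = (k : ZMod m) ^ j - 1}

/-- The set `L = {-(k^j - 1) mod m : j ∈ ℤ_n} ⊆ ℤ_m`. -/
def Lset (m n k : ℕ) : Set (ZMod m) :=
  {x | ∃ j : ℕ, j < n ∧ x = -((k : ZMod m) ^ j - 1)}

open Multiplicative

theorem Subgroup.normalClosure_singleton_eq_zpowers {G : Type*} [Group G] {c : G}
    (hc : c ∈ Subgroup.center G) : Subgroup.normalClosure {c} = Subgroup.zpowers c := by
  have : (Subgroup.zpowers c).Normal :=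
    ⟨fun x hx g => by
      rwa [Subgroup.mem_center_iff.mp (Subgroup.zpowers_le.mpr hc hx) g, mul_inv_cancel_right]⟩
  exact le_antisymm
    (Subgroup.normalClosure_le_normal (Set.singleton_subset_iff.mpr (Subgroup.mem_zpowers c)))
    (Subgroup.zpowers_le.mpr (Subgroup.subset_normalClosure rfl))

def zmodPowersHom {H : Type*} [Group H] (m : ℕ) (h : H) (hh : h ^ m = 1) :
    Multiplicative (ZMod m) →* H :=
  AddMonoidHom.toMultiplicativeLeft
    (ZMod.lift m ⟨zmultiplesHom (Additive H) (Additive.ofMul h), by simp [← ofMul_pow, hh]⟩)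

theorem zmodPowersHom_ofAdd_natCast {H : Type*} [Group H] {m : ℕ} {h : H} (hh : h ^ m = 1)
    (x : ℕ) : zmodPowersHom m h hh (ofAdd (x : ZMod m)) = h ^ x := by
  rw [← nsmul_one, ofAdd_nsmul, map_pow, ← Int.cast_one]
  simp only [zmodPowersHom, AddMonoidHom.coe_toMultiplicativeLeft, Function.comp_apply,
    toAdd_ofAdd, ZMod.lift_coe]
  simp

namespace SemidirectProduct

variable {N G : Type*} [Group N] [Group G] {φ : G →* MulAut N}

theorem inr_mul_inl (g : G) (x : N) : (inr g * inl x : N ⋊[φ] G) = inl (φ g x) * inr g := by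
  simp [inl_aut, mul_assoc]

theorem inl_mem_center {N : Type*} [CommGroup N] {φ : G →* MulAut N} {x : N}
    (hx : ∀ g, φ g x = x) : inl x ∈ Subgroup.center (N ⋊[φ] G) :=
  Subgroup.mem_center_iff.mpr fun y => by ext <;> simp [hx, mul_comm]

theorem inr_mem_center {G : Type*} [CommGroup G] {φ : G →* MulAut N} {g : G} (hg : φ g = 1) :
    inr g ∈ Subgroup.center (N ⋊[φ] G) :=
  Subgroup.mem_center_iff.mpr fun y => by ext <;> simp [hg, mul_comm]

theorem lift_condition_of_forall_mem_zpowers {H : Type*} [Group H] (fn : N →* H) (fg : G →* H)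
    {g₀ : G} (hg₀ : ∀ g, g ∈ Subgroup.zpowers g₀)
    (h : ∀ x, fn (φ g₀ x) = fg g₀ * fn x * (fg g₀)⁻¹) (g : G) :
    fn.comp (φ g).toMonoidHom = (MulAut.conj (fg g)).toMonoidHom.comp fn := by
  let S : Subgroup G :=
    { carrier := {g | ∀ x, fn (φ g x) = fg g * fn x * (fg g)⁻¹}
      one_mem' := by simp
      mul_mem' := fun {g g'} hg hg' x => by
        rw [map_mul, MulAut.mul_apply, hg, hg', map_mul]
        group
      inv_mem' := fun {g} hg x => by
        have := hg ((φ g)⁻¹ x)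
        simp only [MulAut.apply_inv_self] at this
        simp [this, mul_assoc] }
  ext x
  simpa using Subgroup.zpowers_le.mpr (show g₀ ∈ S from h) (hg₀ g) x

end SemidirectProduct

namespace HolderModel

open SemidirectProduct

variable {m : ℕ}

def unitsScale (m : ℕ) : (ZMod m)ˣ →* MulAut (Multiplicative (ZMod m)) where
  toFun u :=
    { toFun := fun x => ofAdd (u * toAdd x)
      invFun := fun x => ofAdd (↑u⁻¹ * toAdd x)
      left_inv := fun x => by simp
      right_inv := fun x => by simp
      map_mul' := fun x y => by simp [mul_add] }
  map_one' := by ext; simp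
  map_mul' u v := by ext; simp [mul_assoc]

-- `ofAdd 1` acts by `u⁻¹`, so that `b⁻¹ a b = a ^ u` for `a = inl (ofAdd 1)` and
-- `b = inr (ofAdd 1)`.
def action (u : (ZMod m)ˣ) : Multiplicative ℤ →* MulAut (Multiplicative (ZMod m)) :=
  (unitsScale m).comp (zpowersHom _ u⁻¹)

theorem action_apply (u : (ZMod m)ˣ) (j : ℤ) (x : ZMod m) :
    action u (ofAdd j) (ofAdd x) = ofAdd (↑(u⁻¹ ^ j) * x) := rfl

abbrev Cover (u : (ZMod m)ˣ) := Multiplicative (ZMod m) ⋊[action u] Multiplicative ℤ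

def relator (u : (ZMod m)ˣ) (n : ℕ) (l : ZMod m) : Cover u :=
  inr (ofAdd (n : ℤ)) * inl (ofAdd (-l))

end HolderModel

abbrev HolderModel {m : ℕ} (u : (ZMod m)ˣ) (n : ℕ) (l : ZMod m) :=
  HolderModel.Cover u ⧸ Subgroup.normalClosure {HolderModel.relator u n l}

namespace HolderModel

open SemidirectProduct

variable {m n : ℕ} {u : (ZMod m)ˣ} {l : ZMod m}

theorem relator_mem_center (hu : u ^ n = 1) (hl : l * u = l) :
    relator u n l ∈ Subgroup.center (Cover u) := by
  refine Subgroup.mul_mem _ (inr_mem_center ?_) (inl_mem_center fun g => ?_)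
  · ext x
    rw [← ofAdd_toAdd x, action_apply]
    simp [hu]
  · have hstab : (u ^ toAdd g)⁻¹ ∈ MulAction.stabilizer (ZMod m)ˣ l :=
      inv_mem (zpow_mem (by simpa [Units.smul_def, mul_comm] using hl) _)
    rw [MulAction.mem_stabilizer_iff, Units.smul_def, smul_eq_mul] at hstab
    rw [← ofAdd_toAdd g, action_apply, inv_zpow, mul_neg, hstab]

def aPow : Multiplicative (ZMod m) →* HolderModel u n l := (QuotientGroup.mk' _).comp inl

theorem aPow_eq_one_iff (hn : n ≠ 0) (hu : u ^ n = 1) (hl : l * u = l)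
    {x : Multiplicative (ZMod m)} : (aPow x : HolderModel u n l) = 1 ↔ x = 1 := by
  refine ⟨fun h => ?_, fun h => by rw [h, map_one]⟩
  rw [aPow, MonoidHom.comp_apply, QuotientGroup.mk'_apply, QuotientGroup.eq_one_iff,
    Subgroup.normalClosure_singleton_eq_zpowers (relator_mem_center hu hl)] at h
  obtain ⟨s, hs⟩ := h
  have hright : rightHom (relator u n l ^ s) = rightHom (inl x) := congrArg rightHom hs
  rw [map_zpow, relator, map_mul, rightHom_inr, rightHom_inl, rightHom_inl, mul_one,
    ← ofAdd_zsmul, ofAdd_eq_one, smul_eq_mul, mul_eq_zero, Nat.cast_eq_zero] at hright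
  rw [← inl_inj (φ := action u), ← hs, hright.resolve_right hn]
  simp

theorem aPow_injective (hn : n ≠ 0) (hu : u ^ n = 1) (hl : l * u = l) :
    Function.Injective (aPow : Multiplicative (ZMod m) → HolderModel u n l) :=
  (injective_iff_map_eq_one _).mpr fun _ => (aPow_eq_one_iff hn hu hl).mp

def bPow : Multiplicative ℤ →* HolderModel u n l := (QuotientGroup.mk' _).comp inr

theorem exists_eq_aPow_mul_bPow (p : HolderModel u n l) : ∃ x g, p = aPow x * bPow g := by
  obtain ⟨⟨x, g⟩, rfl⟩ := QuotientGroup.mk'_surjective _ p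
  exact ⟨x, g, by rw [mk_eq_inl_mul_inr, map_mul]; rfl⟩

theorem bPow_mul_aPow (g : Multiplicative ℤ) (x : Multiplicative (ZMod m)) :
    (bPow g * aPow x : HolderModel u n l) = aPow (action u g x) * bPow g := by
  simp only [aPow, bPow, MonoidHom.comp_apply, ← map_mul, inr_mul_inl]

theorem bPow_ofAdd_natCast : (bPow (ofAdd (n : ℤ)) : HolderModel u n l) = aPow (ofAdd l) := by
  have h : QuotientGroup.mk' _ (inr (ofAdd (n : ℤ)) * inl (ofAdd (-l))) =
      (1 : HolderModel u n l) :=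
    (QuotientGroup.eq_one_iff _).mpr (Subgroup.subset_normalClosure rfl)
  rwa [map_mul, mul_eq_one_iff_eq_inv, ← map_inv, ← map_inv, ofAdd_neg, inv_inv] at h

def a : HolderModel u n l := aPow (ofAdd 1)

def b : HolderModel u n l := bPow (ofAdd 1)

theorem a_pow_natCast (x : ℕ) : (a : HolderModel u n l) ^ x = aPow (ofAdd (x : ZMod m)) := by
  rw [a, ← map_pow, ← ofAdd_nsmul, nsmul_one]

theorem a_pow_m : (a : HolderModel u n l) ^ m = 1 := by
  rw [a_pow_natCast, ZMod.natCast_self, ofAdd_zero, map_one]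

theorem b_pow_n : (b : HolderModel u n l) ^ n = aPow (ofAdd l) := by
  rw [b, ← map_pow, ← ofAdd_nsmul, nsmul_one, bPow_ofAdd_natCast]

theorem inv_b_mul_a_mul_b : (b⁻¹ * a * b : HolderModel u n l) = aPow (ofAdd (u : ZMod m)) := by
  rw [mul_assoc, inv_mul_eq_iff_eq_mul, a, b, bPow_mul_aPow, action_apply]
  simp

theorem exists_eq_aPow_of_commute_a (horder : orderOf u = n) (hn : n ≠ 0) (hl : l * u = l)
    {p : HolderModel u n l} (h : a * p = p * a) : ∃ y, p = aPow y := by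
  have hu : u ^ n = 1 := horder ▸ pow_orderOf_eq_one u
  obtain ⟨x, g, rfl⟩ := exists_eq_aPow_mul_bPow p
  have hfix : action u g (ofAdd 1) = ofAdd 1 := by
    rw [a, mul_assoc, bPow_mul_aPow, ← mul_assoc, ← mul_assoc, ← map_mul, ← map_mul,
      mul_left_inj, (aPow_injective hn hu hl).eq_iff, mul_comm, mul_left_cancel_iff] at h
    exact h.symm
  obtain ⟨s, hs⟩ : (n : ℤ) ∣ toAdd g := by
    rwa [← ofAdd_toAdd g, action_apply, mul_one, Equiv.apply_eq_iff_eq, Units.val_eq_one,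
      inv_zpow, inv_eq_one, ← orderOf_dvd_iff_zpow_eq_one, horder] at hfix
  have hg : g = ofAdd (n : ℤ) ^ s := by
    rw [← ofAdd_zsmul, smul_eq_mul, mul_comm, ← hs, ofAdd_toAdd]
  exact ⟨x * ofAdd l ^ s, by rw [hg, map_zpow, bPow_ofAdd_natCast, map_mul, map_zpow]⟩

theorem eq_one_of_commute_b (hn : n ≠ 0) (hu : u ^ n = 1) (hl : l * u = l)
    (hU : IsUnit ((u : ZMod m) - 1)) {y : Multiplicative (ZMod m)}
    (h : b * aPow y = (aPow y : HolderModel u n l) * b) : y = 1 := by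
  rw [b, bPow_mul_aPow, mul_left_inj, (aPow_injective hn hu hl).eq_iff, ← ofAdd_toAdd y,
    action_apply, Equiv.apply_eq_iff_eq, zpow_one] at h
  have : ((u : ZMod m) - 1) * toAdd y = 0 := by
    linear_combination -(u : ZMod m) * h + toAdd y * u.mul_inv
  rw [← ofAdd_toAdd y, hU.mul_right_eq_zero.mp this, ofAdd_zero]

theorem eq_one_of_commute (horder : orderOf u = n) (hn : n ≠ 0) (hl : l * u = l)
    (hU : IsUnit ((u : ZMod m) - 1)) {p : HolderModel u n l} (ha : a * p = p * a)
    (hb : b * p = p * b) : p = 1 := by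
  obtain ⟨y, rfl⟩ := exists_eq_aPow_of_commute_a horder hn hl ha
  rw [eq_one_of_commute_b hn (horder ▸ pow_orderOf_eq_one u) hl hU hb, map_one]

end HolderModel

theorem ZMod.natCast_pow_eq_one_iff {m k d : ℕ} :
    (k : ZMod m) ^ d = 1 ↔ k ^ d ≡ 1 [MOD m] := by
  rw [← ZMod.natCast_eq_natCast_iff]
  push_cast
  rfl

theorem IsIndex.orderOf_natCast {m k n : ℕ} (h : IsIndex m k n) : orderOf (k : ZMod m) = n :=
  (orderOf_eq_iff h.1).mpr ⟨ZMod.natCast_pow_eq_one_iff.mpr h.2.1, fun d hd hd0 hkd =>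
    (h.2.2 d hd0 (ZMod.natCast_pow_eq_one_iff.mp hkd)).not_gt hd⟩

theorem IsIndex.exists_unit {m k n : ℕ} (h : IsIndex m k n) :
    ∃ u : (ZMod m)ˣ, (u : ZMod m) = k ∧ orderOf u = n := by
  have hk : IsUnit (k : ZMod m) :=
    IsUnit.of_pow_eq_one (h.orderOf_natCast ▸ pow_orderOf_eq_one _) h.1.ne'
  exact ⟨hk.unit, hk.unit_spec, by rw [← orderOf_units, hk.unit_spec, h.orderOf_natCast]⟩

theorem exists_mem_Rset_isUnit_iff {m n k : ℕ} (hind : IsIndex m k n) :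
    (∃ x ∈ Rset m n k, IsUnit x) ↔ IsUnit ((k : ZMod m) - 1) := by
  constructor
  · rintro ⟨x, ⟨j, -, rfl⟩, hx⟩
    rw [← geom_sum_mul] at hx
    exact isUnit_of_mul_isUnit_right hx
  · intro hU
    -- `1 % n` is `1`, or `0` when `n = 1`; in both cases `k ^ (1 % n) = k` in `ℤ_m`.
    refine ⟨_, ⟨1 % n, Nat.mod_lt 1 hind.1, rfl⟩, ?_⟩
    rwa [← pow_eq_pow_mod 1 (ZMod.natCast_pow_eq_one_iff.mpr hind.2.1), pow_one]

theorem exists_mem_Lset_isUnit_iff {m n k : ℕ} :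
    (∃ x ∈ Lset m n k, IsUnit x) ↔ ∃ x ∈ Rset m n k, IsUnit x := by
  simp [Lset, Rset, -neg_sub, IsUnit.neg_iff]

namespace HolderGroup

open SemidirectProduct

variable {m n k l : ℕ}

def a : HolderGroup m n k l := PresentedGroup.of true

def b : HolderGroup m n k l := PresentedGroup.of false

theorem mk_eq_one_of_mem_rels {r : FreeGroup Bool} (hr : r ∈ holderRels m n k l) :
    (PresentedGroup.mk _ r : HolderGroup m n k l) = 1 :=
  (QuotientGroup.eq_one_iff r).mpr (Subgroup.subset_normalClosure hr)

theorem a_pow_m : (a : HolderGroup m n k l) ^ m = 1 := by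
  have h := mk_eq_one_of_mem_rels (m := m) (n := n) (k := k) (l := l) (.inl rfl)
  simp only [map_pow] at h
  exact h

theorem b_pow_n : (b : HolderGroup m n k l) ^ n = a ^ l := by
  have h := mk_eq_one_of_mem_rels (m := m) (n := n) (k := k) (l := l) (.inr (.inl rfl))
  simp only [map_mul, map_inv, map_pow, mul_inv_eq_one] at h
  exact h

theorem inv_b_mul_a_mul_b : (b⁻¹ * a * b : HolderGroup m n k l) = a ^ k := by
  have h := mk_eq_one_of_mem_rels (m := m) (n := n) (k := k) (l := l) (.inr (.inr rfl))
  simp only [map_mul, map_inv, map_pow, mul_inv_eq_one] at h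
  exact h

theorem hom_ext {H : Type*} [Group H] {f g : HolderGroup m n k l →* H} (ha : f a = g a)
    (hb : f b = g b) : f = g :=
  PresentedGroup.ext fun
    | true => ha
    | false => hb

theorem mem_center_of_commute {x : HolderGroup m n k l} (ha : a * x = x * a)
    (hb : b * x = x * b) : x ∈ Subgroup.center (HolderGroup m n k l) := by
  refine Subgroup.mem_center_iff.mpr fun y => ?_
  have hy : y ∈ Subgroup.centralizer {x} := PresentedGroup.generated_by _ _ (fun
    | true => Subgroup.mem_centralizer_singleton_iff.mpr ha
    | false => Subgroup.mem_centralizer_singleton_iff.mpr hb) y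
  exact Subgroup.mem_centralizer_singleton_iff.mp hy

theorem a_pow_eq_of_natCast_eq {x y : ℕ} (h : (x : ZMod m) = y) :
    (a : HolderGroup m n k l) ^ x = a ^ y := by
  rw [pow_eq_pow_mod x a_pow_m, pow_eq_pow_mod y a_pow_m,
    (ZMod.natCast_eq_natCast_iff' x y m).mp h]

theorem inv_b_mul_a_pow_mul_b (x : ℕ) :
    (b⁻¹ * a ^ x * b : HolderGroup m n k l) = a ^ (k * x) := by
  have h := conj_pow (a := (b : HolderGroup m n k l)⁻¹) (b := a) (i := x)
  rw [inv_inv] at h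
  rw [pow_mul, ← inv_b_mul_a_mul_b, h]

theorem a_pow_val_mem_center [NeZero m] {t : ZMod m} (ht : ((k : ZMod m) - 1) * t = 0) :
    (a : HolderGroup m n k l) ^ t.val ∈ Subgroup.center (HolderGroup m n k l) := by
  refine mem_center_of_commute (by rw [← pow_succ', ← pow_succ]) ?_
  have h := inv_b_mul_a_pow_mul_b (m := m) (n := n) (k := k) (l := l) t.val
  rw [a_pow_eq_of_natCast_eq (x := k * t.val) (y := t.val)
    (by rw [Nat.cast_mul, ZMod.natCast_zmod_val]; linear_combination ht),
    mul_assoc, inv_mul_eq_iff_eq_mul] at h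
  exact h.symm

def toModel (u : (ZMod m)ˣ) (hu : (u : ZMod m) = k) :
    HolderGroup m n k l →* HolderModel u n l :=
  PresentedGroup.toGroup (f := fun t => cond t HolderModel.a HolderModel.b) (by
    rintro r (rfl | rfl | rfl)
    · simp [HolderModel.a_pow_m]
    · simp [HolderModel.b_pow_n, HolderModel.a_pow_natCast]
    · simp [HolderModel.inv_b_mul_a_mul_b, HolderModel.a_pow_natCast, hu])

theorem toModel_a (u : (ZMod m)ˣ) (hu : (u : ZMod m) = k) :
    toModel (n := n) (l := l) u hu a = HolderModel.a :=
  PresentedGroup.toGroup.of _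

theorem toModel_b (u : (ZMod m)ˣ) (hu : (u : ZMod m) = k) :
    toModel (n := n) (l := l) u hu b = HolderModel.b :=
  PresentedGroup.toGroup.of _

def ofCover [NeZero m] (u : (ZMod m)ˣ) (hu : (u : ZMod m) = k) :
    HolderModel.Cover u →* HolderGroup m n k l :=
  lift (zmodPowersHom m a a_pow_m) (zpowersHom _ b)
    -- at the generator `ofAdd (-1)` the compatibility condition is `b⁻¹ a^x b = a^(k x)`
    (lift_condition_of_forall_mem_zpowers _ _ (g₀ := ofAdd (-1))
      (fun g => ⟨-toAdd g, by simp [← ofAdd_zsmul]⟩) (fun x => by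
        rw [← ofAdd_toAdd x, ← ZMod.natCast_zmod_val (toAdd x), HolderModel.action_apply,
          zpow_neg_one, inv_inv, hu, ← Nat.cast_mul, zmodPowersHom_ofAdd_natCast,
          zmodPowersHom_ofAdd_natCast, zpowersHom_apply, toAdd_ofAdd, zpow_neg_one, inv_inv,
          inv_b_mul_a_pow_mul_b]))

def ofModel [NeZero m] (u : (ZMod m)ˣ) (hu : (u : ZMod m) = k) :
    HolderModel u n l →* HolderGroup m n k l :=
  QuotientGroup.lift _ (ofCover u hu) <| Subgroup.normalClosure_le_normal <|
    Set.singleton_subset_iff.mpr <| by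
      rw [SetLike.mem_coe, MonoidHom.mem_ker, HolderModel.relator, map_mul, ofCover, lift_inr,
        lift_inl, zpowersHom_apply, toAdd_ofAdd, zpow_natCast, ofAdd_neg, map_inv,
        zmodPowersHom_ofAdd_natCast, b_pow_n, mul_inv_cancel]

theorem toModel_injective [NeZero m] (u : (ZMod m)ˣ) (hu : (u : ZMod m) = k) :
    Function.Injective (toModel (n := n) (l := l) u hu) := by
  have h : (ofModel u hu).comp (toModel u hu) = MonoidHom.id (HolderGroup m n k l) := by
    refine hom_ext ?_ ?_
    · rw [MonoidHom.comp_apply, toModel_a, HolderModel.a, HolderModel.aPow,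
        MonoidHom.comp_apply, ofModel, QuotientGroup.mk'_apply, QuotientGroup.lift_mk, ofCover,
        lift_inl, ← Nat.cast_one, zmodPowersHom_ofAdd_natCast, pow_one, MonoidHom.id_apply]
    · rw [MonoidHom.comp_apply, toModel_b, HolderModel.b, HolderModel.bPow,
        MonoidHom.comp_apply, ofModel, QuotientGroup.mk'_apply, QuotientGroup.lift_mk, ofCover,
        lift_inr, zpowersHom_apply, toAdd_ofAdd, zpow_one, MonoidHom.id_apply]
  exact Function.LeftInverse.injective (DFunLike.congr_fun h)

theorem center_eq_bot_of_isUnit [NeZero m] {u : (ZMod m)ˣ} (hu : (u : ZMod m) = k)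
    (horder : orderOf u = n) (hn : n ≠ 0) (hl : (l : ZMod m) * u = l)
    (hU : IsUnit ((k : ZMod m) - 1)) : Subgroup.center (HolderGroup m n k l) = ⊥ := by
  refine (Subgroup.eq_bot_iff_forall _).mpr fun z hz => toModel_injective u hu ?_
  rw [map_one]
  refine HolderModel.eq_one_of_commute horder hn hl (hu ▸ hU) ?_ ?_
  · rw [← toModel_a u hu, ← map_mul, ← map_mul, Subgroup.mem_center_iff.mp hz]
  · rw [← toModel_b u hu, ← map_mul, ← map_mul, Subgroup.mem_center_iff.mp hz]

theorem center_ne_bot_of_not_isUnit [NeZero m] {u : (ZMod m)ˣ} (hu : (u : ZMod m) = k)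
    (hn : n ≠ 0) (hun : u ^ n = 1) (hl : (l : ZMod m) * u = l)
    (hU : ¬IsUnit ((k : ZMod m) - 1)) : Subgroup.center (HolderGroup m n k l) ≠ ⊥ := by
  obtain ⟨t, ht, ht0⟩ : ∃ t, ((k : ZMod m) - 1) * t = 0 ∧ t ≠ 0 := by
    simpa [isUnit_iff_mem_nonZeroDivisors_of_finite, mem_nonZeroDivisors_iff_left] using hU
  intro hbot
  have hcenter := a_pow_val_mem_center (n := n) (l := l) ht
  rw [hbot, Subgroup.mem_bot] at hcenter
  apply ht0
  rw [← ofAdd_eq_one, ← HolderModel.aPow_eq_one_iff hn hun hl, ← ZMod.natCast_zmod_val t,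
    ← HolderModel.a_pow_natCast, ← toModel_a u hu, ← map_pow, hcenter, map_one]

theorem center_eq_bot_iff (hm : 0 < m) (hk : 0 < k) (h2 : l * (k - 1) ≡ 0 [MOD m])
    (hind : IsIndex m k n) :
    Subgroup.center (HolderGroup m n k l) = ⊥ ↔ IsUnit ((k : ZMod m) - 1) := by
  have : NeZero m := ⟨hm.ne'⟩
  obtain ⟨u, hu, horder⟩ := hind.exists_unit
  have hl : (l : ZMod m) * u = l := by
    have h := (ZMod.natCast_eq_natCast_iff _ _ _).mpr h2
    push_cast [Nat.cast_sub hk] at h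
    rw [hu]
    linear_combination h
  exact ⟨fun hbot => by_contra fun hU => center_ne_bot_of_not_isUnit hu hind.1.ne'
    (horder ▸ pow_orderOf_eq_one u) hl hU hbot, center_eq_bot_of_isUnit hu horder hind.1.ne' hl⟩

end HolderGroup

theorem stmt_4_general (m n k l : ℕ) (hm : 0 < m) (hk : 0 < k)
    (h2 : l * (k - 1) ≡ 0 [MOD m]) (hind : IsIndex m k n) :
    (Subgroup.center (HolderGroup m n k l) = ⊥ ↔
        ∃ x ∈ Rset m n k, IsUnit x) ∧
      ((∃ x ∈ Rset m n k, IsUnit x) ↔ ∃ x ∈ Lset m n k, IsUnit x) :=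
  ⟨(HolderGroup.center_eq_bot_iff hm hk h2 hind).trans (exists_mem_Rset_isUnit_iff hind).symm,
    exists_mem_Lset_isUnit_iff.symm⟩

/-- for a finite metacyclic group with Hölder presentation and
`n = ind_m(k)`, the following are equivalent: (a) trivial centre,
(b) `R` contains a unit of `ℤ_m`, (c) `L` contains a unit of `ℤ_m`. -/
theorem stmt_4 (m n k l : ℕ) (hm : 0 < m) (hn : 0 < n) (hk : 0 < k)
    (hl : 0 < l) (h2 : l * (k - 1) ≡ 0 [MOD m]) (hind : IsIndex m k n) :
    (Subgroup.center (HolderGroup m n k l) = ⊥ ↔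
        ∃ x ∈ Rset m n k, IsUnit x) ∧
      ((∃ x ∈ Rset m n k, IsUnit x) ↔ ∃ x ∈ Lset m n k, IsUnit x) :=
  stmt_4_general m n k l hm hk h2 hind
end

section
/- In G = G(m,n,k) with trivial centre, every right commutation map ρ(a^r b^s) (sending x to [x, a^r b^s]) equals the mu-map μ(k^s - 1, r·k^s), and every left commutation map λ(a^r b^s) (sending x to [a^r b^s, x]) equals μ(-(k^s - 1), -r·k^s). -/
/-!
Since `b⁻¹ a b = a^k`, moving `b^s` to the left past a power of `a` multiplies its exponent by
`k^s`, so a product `(a^i b^j)(a^r b^s)` has the normal form `b^(j+s) a^(i k^(j+s) + r k^s)`.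
In the commutator the `b`-parts cancel, leaving `a^N` with `N = i k^j (k^s - 1) - r k^s (k^j - 1)`;
as `a^m = 1`, only `N mod m` matters, and that is the exponent of the mu-map.
-/

/-- Relations for the presentation `⟨a, b ; a^m = 1, b^n = 1, b⁻¹ab = a^k⟩`. -/
def mcRels (m n k : ℕ) : Set (FreeGroup Bool) :=
  {FreeGroup.of true ^ m, FreeGroup.of false ^ n,
    (FreeGroup.of false)⁻¹ * FreeGroup.of true * FreeGroup.of false *
      (FreeGroup.of true ^ k)⁻¹}

/-- The metacyclic group `G(m,n,k) = ⟨a, b ; a^m = 1, b^n = 1, b⁻¹ab = a^k⟩`. -/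
def McGroup (m n k : ℕ) := PresentedGroup (mcRels m n k)

instance (m n k : ℕ) : Group (McGroup m n k) := by
  unfold McGroup; infer_instance

/-- The generator `a` of `G(m,n,k)`. -/
def McGroup.a (m n k : ℕ) : McGroup m n k := PresentedGroup.of true

/-- The generator `b` of `G(m,n,k)`. -/
def McGroup.b (m n k : ℕ) : McGroup m n k := PresentedGroup.of false

/-- The value of the mu-map `μ(x,y)` on the element `a^i b^j`:
`(a^i b^j) μ(x,y) = a^N` with `N ≡ x·i·k^j − y·(k^j − 1) (mod m)`. -/
def muApply (m n k : ℕ) (x y : ZMod m) (i j : ℕ) : McGroup m n k :=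
  McGroup.a m n k ^ (x * (i : ZMod m) * (k : ZMod m) ^ j -
    y * ((k : ZMod m) ^ j - 1)).val

section ConjPow

variable {G : Type*} [Group G] {a b : G} {k : ℕ}

theorem inv_mul_zpow_mul_eq_zpow (h : b⁻¹ * a * b = a ^ k) (u : ℤ) :
    b⁻¹ * a ^ u * b = a ^ (u * k) := by
  simpa [h, ← zpow_natCast, ← zpow_mul, mul_comm] using
    (conj_zpow (a := b⁻¹) (b := a) (i := u)).symm

theorem zpow_mul_pow_eq_pow_mul_zpow (h : b⁻¹ * a * b = a ^ k) (u : ℤ) (s : ℕ) :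
    a ^ u * b ^ s = b ^ s * a ^ (u * (k : ℤ) ^ s) := by
  induction s generalizing u with
  | zero => simp
  | succ t ih =>
    rw [pow_succ b, ← mul_assoc, ih, pow_succ (k : ℤ), ← mul_assoc u,
      ← inv_mul_zpow_mul_eq_zpow h]
    group

theorem pow_mul_pow_eq_pow_mul_zpow (h : b⁻¹ * a * b = a ^ k) (i s : ℕ) :
    a ^ i * b ^ s = b ^ s * a ^ ((i : ℤ) * (k : ℤ) ^ s) := by
  rw [← zpow_natCast a i, zpow_mul_pow_eq_pow_mul_zpow h]

theorem mul_eq_pow_mul_zpow (h : b⁻¹ * a * b = a ^ k) (i j r s : ℕ) :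
    a ^ i * b ^ j * (a ^ r * b ^ s) =
      b ^ (j + s) * a ^ ((i : ℤ) * (k : ℤ) ^ (j + s) + r * (k : ℤ) ^ s) := by
  rw [pow_mul_pow_eq_pow_mul_zpow h r, ← mul_assoc, mul_assoc (a ^ i), ← pow_add,
    pow_mul_pow_eq_pow_mul_zpow h, mul_assoc, ← zpow_add]

theorem commutator_eq_zpow (h : b⁻¹ * a * b = a ^ k) (i j r s : ℕ) :
    (a ^ i * b ^ j)⁻¹ * (a ^ r * b ^ s)⁻¹ * (a ^ i * b ^ j) * (a ^ r * b ^ s) =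
      a ^ ((i : ℤ) * (k : ℤ) ^ j * ((k : ℤ) ^ s - 1) - r * (k : ℤ) ^ s * ((k : ℤ) ^ j - 1)) := by
  calc _ = (a ^ r * b ^ s * (a ^ i * b ^ j))⁻¹ * (a ^ i * b ^ j * (a ^ r * b ^ s)) := by group
    _ = _ := by
      rw [mul_eq_pow_mul_zpow h, mul_eq_pow_mul_zpow h, add_comm s j, mul_inv_rev, mul_assoc,
        inv_mul_cancel_left, ← zpow_neg, ← zpow_add]
      congr 1
      ring

end ConjPow

theorem zpow_val_eq_zpow_of_pow_eq_one {G : Type*} [Group G] {a : G} {m : ℕ} [NeZero m]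
    (ha : a ^ m = 1) {z : ℤ} {x : ZMod m} (hz : (z : ZMod m) = x) : a ^ x.val = a ^ z := by
  rw [← zpow_natCast, zpow_eq_zpow_iff_modEq]
  refine Int.ModEq.of_dvd (Int.natCast_dvd_natCast.2 (orderOf_dvd_of_pow_eq_one ha)) ?_
  rw [← ZMod.intCast_eq_intCast_iff, hz]
  simp

namespace McGroup

theorem a_pow_eq_one (m n k : ℕ) : a m n k ^ m = 1 :=
  PresentedGroup.one_of_mem (by simp [mcRels])

theorem b_inv_mul_a_mul_b (m n k : ℕ) : (b m n k)⁻¹ * a m n k * b m n k = a m n k ^ k :=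
  eq_of_mul_inv_eq_one (PresentedGroup.one_of_mem (by simp [mcRels]))

theorem muApply_eq_zpow {m : ℕ} (hm : 0 < m) (n k : ℕ) {x y : ZMod m} {i j : ℕ} {z : ℤ}
    (hz : (z : ZMod m) = x * i * (k : ZMod m) ^ j - y * ((k : ZMod m) ^ j - 1)) :
    muApply m n k x y i j = a m n k ^ z :=
  haveI : NeZero m := ⟨hm.ne'⟩
  zpow_val_eq_zpow_of_pow_eq_one (a_pow_eq_one m n k) hz

end McGroup

theorem stmt_5_general (m n k : ℕ) (hm : 0 < m)
    (r s : ℕ) :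
    ∀ i j : ℕ,
      ((McGroup.a m n k ^ i * McGroup.b m n k ^ j)⁻¹ *
          (McGroup.a m n k ^ r * McGroup.b m n k ^ s)⁻¹ *
          (McGroup.a m n k ^ i * McGroup.b m n k ^ j) *
          (McGroup.a m n k ^ r * McGroup.b m n k ^ s) =
        muApply m n k ((k : ZMod m) ^ s - 1) ((r : ZMod m) * (k : ZMod m) ^ s)
          i j) ∧
      ((McGroup.a m n k ^ r * McGroup.b m n k ^ s)⁻¹ *
          (McGroup.a m n k ^ i * McGroup.b m n k ^ j)⁻¹ *
          (McGroup.a m n k ^ r * McGroup.b m n k ^ s) *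
          (McGroup.a m n k ^ i * McGroup.b m n k ^ j) =
        muApply m n k (-((k : ZMod m) ^ s - 1))
          (-((r : ZMod m) * (k : ZMod m) ^ s)) i j) := by
  intro i j
  have hab := McGroup.b_inv_mul_a_mul_b m n k
  constructor <;> rw [commutator_eq_zpow hab, McGroup.muApply_eq_zpow hm] <;> push_cast <;> ring

/-- in `G(m,n,k)` with trivial centre, the right commutation map
`ρ(a^r b^s) : x ↦ [x, a^r b^s]` equals the mu-map `μ(k^s − 1, r·k^s)`, and the
left commutation map `λ(a^r b^s) : x ↦ [a^r b^s, x]` equals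
`μ(−(k^s − 1), −r·k^s)` (as maps on `G`, every element of which has the form
`a^i b^j`). -/
theorem stmt_5 (m n k : ℕ) (hm : 0 < m) (hk : 0 < k)
    (hcop : Nat.gcd m (k - 1) = 1) (hind : IsIndex m k n)
    (r s : ℕ) :
    ∀ i j : ℕ,
      ((McGroup.a m n k ^ i * McGroup.b m n k ^ j)⁻¹ *
          (McGroup.a m n k ^ r * McGroup.b m n k ^ s)⁻¹ *
          (McGroup.a m n k ^ i * McGroup.b m n k ^ j) *
          (McGroup.a m n k ^ r * McGroup.b m n k ^ s) =
        muApply m n k ((k : ZMod m) ^ s - 1) ((r : ZMod m) * (k : ZMod m) ^ s)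
          i j) ∧
      ((McGroup.a m n k ^ r * McGroup.b m n k ^ s)⁻¹ *
          (McGroup.a m n k ^ i * McGroup.b m n k ^ j)⁻¹ *
          (McGroup.a m n k ^ r * McGroup.b m n k ^ s) *
          (McGroup.a m n k ^ i * McGroup.b m n k ^ j) =
        muApply m n k (-((k : ZMod m) ^ s - 1))
          (-((r : ZMod m) * (k : ZMod m) ^ s)) i j) :=
  stmt_5_general m n k hm r s
end

section
/- For G = G(m,n,k) with trivial centre, x, y ∈ ℤ_m, and u invertible in ℤ_m, the containers satisfy C(x, yu) = C(x, y); moreover C(x,y) = C(x,1) if and only if y is invertible in ℤ_m. -/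
/-- The mu-map `μ(x,y)` of `G = G(m,n,k)`, acting on elements of `G` written in
the normal form `a^i b^j` (identified with pairs `(i,j) ∈ ℤ_m × ℤ_n`):
`(a^i b^j) μ(x,y) = a^N` with `N ≡ x·i·k^j − y·(k^j − 1) (mod m)`. -/
def Mu (m n k : ℕ) (x y : ZMod m) : Function.End (ZMod m × ZMod n) :=
  fun p => (x * p.1 * (k : ZMod m) ^ p.2.val -
    y * ((k : ZMod m) ^ p.2.val - 1), 0)

/-- The container `C(x,y) = {μ(x, yz) : z ∈ ℤ_m}`. -/
def Container (m n k : ℕ) (x y : ZMod m) :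
    Set (Function.End (ZMod m × ZMod n)) :=
  {f | ∃ z : ZMod m, f = Mu m n k x (y * z)}

/-!
`C(x,y)` is the image under the injective map `w ↦ μ(x,w)` of the principal ideal `yℤ_m`;
injectivity comes from evaluating at `b`, where `μ(x,w)` gives `-w(k-1)` and `k-1` is a unit.
So `C(x,y)` only depends on `yℤ_m`, which is unchanged by unit factors and equals `ℤ_m = 1ℤ_m`
exactly when `y` is a unit.
-/

section

variable {m n k : ℕ}

lemma isUnit_natCast_sub_one (hcop : Nat.gcd m (k - 1) = 1) : IsUnit ((k : ZMod m) - 1) := by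
  rcases Nat.eq_zero_or_pos k with rfl | hk
  · rw [Nat.zero_sub, Nat.gcd_zero_right] at hcop
    subst hcop
    exact isUnit_of_subsingleton _
  · have hunit := (ZMod.isUnit_iff_coprime (k - 1) m).mpr (Nat.coprime_comm.mp hcop)
    rwa [Nat.cast_sub hk, Nat.cast_one] at hunit

-- For `n = 1` the exponent `(1 : ZMod 1).val` is `0`, but then `k ≡ 1 (mod m)`.
lemma natCast_pow_val_one (hind : IsIndex m k n) : (k : ZMod m) ^ (1 : ZMod n).val = k := by
  rw [ZMod.val_one_eq_one_mod]
  rcases eq_or_ne n 1 with rfl | hn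
  · simpa using ((ZMod.natCast_eq_natCast_iff _ _ _).mpr hind.2.1).symm
  · rw [Nat.one_mod_eq_one.mpr hn, pow_one]

lemma mu_apply_zero_one (hind : IsIndex m k n) (x y : ZMod m) :
    Mu m n k x y (0, 1) = (-(y * ((k : ZMod m) - 1)), 0) := by
  simp [Mu, natCast_pow_val_one hind]

lemma mu_injective (hcop : Nat.gcd m (k - 1) = 1) (hind : IsIndex m k n) (x : ZMod m) :
    Function.Injective (Mu m n k x) := by
  intro y₁ y₂ h
  have h01 := congrArg (fun f => (f (0, 1)).1) h
  simp only [mu_apply_zero_one hind, neg_inj] at h01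
  exact (isUnit_natCast_sub_one hcop).mul_right_cancel h01

lemma container_eq_image (x y : ZMod m) :
    Container m n k x y = Mu m n k x '' {w | y ∣ w} := by
  ext f
  constructor
  · rintro ⟨z, rfl⟩
    exact ⟨y * z, dvd_mul_right y z, rfl⟩
  · rintro ⟨w, ⟨z, rfl⟩, rfl⟩
    exact ⟨z, rfl⟩

lemma container_mul_of_isUnit (x y : ZMod m) {u : ZMod m} (hu : IsUnit u) :
    Container m n k x (y * u) = Container m n k x y := by
  simp only [container_eq_image, hu.mul_right_dvd]

lemma container_eq_container_one_iff (hcop : Nat.gcd m (k - 1) = 1) (hind : IsIndex m k n)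
    (x y : ZMod m) : Container m n k x y = Container m n k x 1 ↔ IsUnit y := by
  rw [container_eq_image, container_eq_image,
    (Set.image_injective.mpr (mu_injective hcop hind x)).eq_iff, isUnit_iff_dvd_one]
  simp only [one_dvd, Set.ofPred_true, Set.eq_univ_iff_forall, Set.mem_ofPred_eq]
  exact ⟨fun h => h 1, fun h w => h.trans (one_dvd w)⟩

end

theorem stmt_10_general (m n k : ℕ)
    (hcop : Nat.gcd m (k - 1) = 1) (hind : IsIndex m k n)
    (x y : ZMod m) :
    (∀ u : ZMod m, IsUnit u →
        Container m n k x (y * u) = Container m n k x y) ∧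
      (Container m n k x y = Container m n k x 1 ↔ IsUnit y) :=
  ⟨fun _ hu => container_mul_of_isUnit x y hu, container_eq_container_one_iff hcop hind x y⟩

/-- for `u` a unit of `ℤ_m`, `C(x, yu) = C(x, y)`; moreover
`C(x,y) = C(x,1)` iff `y` is a unit of `ℤ_m`. -/
theorem stmt_10 (m n k : ℕ) (hm : 0 < m) (hk : 0 < k)
    (hcop : Nat.gcd m (k - 1) = 1) (hind : IsIndex m k n)
    (x y : ZMod m) :
    (∀ u : ZMod m, IsUnit u →
        Container m n k x (y * u) = Container m n k x y) ∧
      (Container m n k x y = Container m n k x 1 ↔ IsUnit y) :=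
  stmt_10_general m n k hcop hind x y
end
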